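/- arXiv:2102.03575 — 2 statements merged into one kernel-verified Lean document; each statement's English description precedes it below -/
import Mathlib

section
/- Let {I₁, J₁} and {I₂, J₂} be cuts of N that do not fulfill Keel's quadratic relation and are distinct. Then exactly one of the following holds: I₁ ⊊ I₂, I₁ ⊊ J₂, J₁ ⊊ I₂, or J₁ ⊊ J₂; moreover in each case the complementary containment also holds (e.g., I₁ ⊊ I₂ implies J₂ ⊊ J₁). -/
/-!
Inside `N` each part of a cut is the complement of the other, so a containment between parts
of two cuts forces the complementary containment. If Keel's relation fails, some part of the
first cut is disjoint from a part of the second, hence contained in the other part, strictly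
because the cuts are distinct. Two such containments at once would either put a nonempty part
inside both (disjoint) parts of the other cut, or produce a strict containment cycle.
-/

def IsComplIn {β : Type*} [Lattice β] [OrderBot β] (N A B : β) : Prop :=
  A ⊔ B = N ∧ Disjoint A B

namespace IsComplIn

variable {β : Type*} [DistribLattice β] [OrderBot β] {N A B C D : β}

theorem symm (hP : IsComplIn N A B) : IsComplIn N B A :=
  ⟨sup_comm B A ▸ hP.1, hP.2.symm⟩

theorem le_of_disjoint (hQ : IsComplIn N C D) (hAN : A ≤ N) (h : Disjoint A C) : A ≤ D :=
  h.left_le_of_le_sup_left (hQ.1 ▸ hAN)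

theorem le_of_le (hP : IsComplIn N A B) (hQ : IsComplIn N C D) (h : A ≤ C) : D ≤ B :=
  hP.le_of_disjoint (hQ.1 ▸ le_sup_right) (hQ.2.symm.mono_right h)

theorem lt_of_lt (hP : IsComplIn N A B) (hQ : IsComplIn N C D) (h : A < C) : D < B :=
  lt_of_le_not_ge (hP.le_of_le hQ h.le)
    fun hBD => h.not_ge (hP.symm.le_of_le hQ.symm hBD)

theorem lt_of_disjoint (hP : IsComplIn N A B) (hQ : IsComplIn N C D) (h : Disjoint A C)
    (hne : ¬(A = D ∧ B = C)) : A < D := by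
  have hAD : A ≤ D := hQ.le_of_disjoint (hP.1 ▸ le_sup_left) h
  refine lt_of_le_of_ne hAD fun he => hne ⟨he, le_antisymm ?_ ?_⟩
  · exact hQ.symm.le_of_le hP he.symm.le
  · exact hP.le_of_le hQ.symm hAD

theorem not_lt_of_lt_of_ne_bot (hQ : IsComplIn N C D) (hA : A ≠ ⊥) (hAC : A < C) : ¬A < D :=
  fun hAD => hA ((hQ.2.mono_left hAC.le).eq_bot_of_le hAD.le)

theorem not_lt_of_lt_of_ne_bot' (hP : IsComplIn N A B) (hQ : IsComplIn N C D) (hD : D ≠ ⊥)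
    (hAC : A < C) : ¬B < C :=
  fun hBC => hD ((hQ.2.symm.mono_right ((hP.lt_of_lt hQ hAC).trans hBC).le).eq_bot_of_le le_rfl)

theorem not_lt_of_lt (hP : IsComplIn N A B) (hQ : IsComplIn N C D) (hAC : A < C) : ¬B < D :=
  (hP.lt_of_lt hQ hAC).not_gt

end IsComplIn

/-- Two distinct cuts of `N` not fulfilling Keel's quadratic relation satisfy exactly one
of the strict containments `I₁ ⊊ I₂`, `I₁ ⊊ J₂`, `J₁ ⊊ I₂`, `J₁ ⊊ J₂`, and in each case
the complementary containment also holds. -/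
theorem nested_cuts_exactly_one_containment {α : Type*} [DecidableEq α]
    (N I₁ J₁ I₂ J₂ : Finset α)
    (h1u : I₁ ∪ J₁ = N) (h1d : Disjoint I₁ J₁) (h1I : 2 ≤ I₁.card) (h1J : 2 ≤ J₁.card)
    (h2u : I₂ ∪ J₂ = N) (h2d : Disjoint I₂ J₂) (h2I : 2 ≤ I₂.card) (h2J : 2 ≤ J₂.card)
    (hnk : ¬((I₁ ∩ I₂).Nonempty ∧ (I₁ ∩ J₂).Nonempty ∧ (J₁ ∩ I₂).Nonempty ∧ (J₁ ∩ J₂).Nonempty))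
    (hdist : ¬(I₁ = I₂ ∧ J₁ = J₂) ∧ ¬(I₁ = J₂ ∧ J₁ = I₂)) :
    ((I₁ ⊂ I₂ ∧ ¬I₁ ⊂ J₂ ∧ ¬J₁ ⊂ I₂ ∧ ¬J₁ ⊂ J₂) ∨
     (¬I₁ ⊂ I₂ ∧ I₁ ⊂ J₂ ∧ ¬J₁ ⊂ I₂ ∧ ¬J₁ ⊂ J₂) ∨
     (¬I₁ ⊂ I₂ ∧ ¬I₁ ⊂ J₂ ∧ J₁ ⊂ I₂ ∧ ¬J₁ ⊂ J₂) ∨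
     (¬I₁ ⊂ I₂ ∧ ¬I₁ ⊂ J₂ ∧ ¬J₁ ⊂ I₂ ∧ J₁ ⊂ J₂)) ∧
    (I₁ ⊂ I₂ → J₂ ⊂ J₁) ∧ (I₁ ⊂ J₂ → I₂ ⊂ J₁) ∧
    (J₁ ⊂ I₂ → J₂ ⊂ I₁) ∧ (J₁ ⊂ J₂ → I₂ ⊂ I₁) := by
  have P : IsComplIn N I₁ J₁ := ⟨h1u, h1d⟩
  have Q : IsComplIn N I₂ J₂ := ⟨h2u, h2d⟩
  have hex : I₁ ⊂ I₂ ∨ I₁ ⊂ J₂ ∨ J₁ ⊂ I₂ ∨ J₁ ⊂ J₂ := by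
    simp only [← Finset.not_disjoint_iff_nonempty_inter, not_and_or, not_not] at hnk
    rcases hnk with h | h | h | h
    · exact Or.inr <| Or.inl <| P.lt_of_disjoint Q h hdist.2
    · exact Or.inl <| P.lt_of_disjoint Q.symm h hdist.1
    · exact Or.inr <| Or.inr <| Or.inr <| P.symm.lt_of_disjoint Q h fun h' => hdist.1 h'.symm
    · exact Or.inr <| Or.inr <| Or.inl <| P.symm.lt_of_disjoint Q.symm h fun h' => hdist.2 h'.symm
  have hI₁ : I₁ ≠ ⊥ := (Finset.card_pos.1 (by omega)).ne_empty
  have hJ₁ : J₁ ≠ ⊥ := (Finset.card_pos.1 (by omega)).ne_empty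
  have hI₂ : I₂ ≠ ⊥ := (Finset.card_pos.1 (by omega)).ne_empty
  have hJ₂ : J₂ ≠ ⊥ := (Finset.card_pos.1 (by omega)).ne_empty
  refine ⟨?_, P.lt_of_lt Q, P.lt_of_lt Q.symm, P.symm.lt_of_lt Q, P.symm.lt_of_lt Q.symm⟩
  rcases hex with h | h | h | h
  · exact Or.inl ⟨h, Q.not_lt_of_lt_of_ne_bot hI₁ h, P.not_lt_of_lt_of_ne_bot' Q hJ₂ h,
      P.not_lt_of_lt Q h⟩
  · exact Or.inr <| Or.inl ⟨Q.symm.not_lt_of_lt_of_ne_bot hI₁ h, h, P.not_lt_of_lt Q.symm h,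
      P.not_lt_of_lt_of_ne_bot' Q.symm hI₂ h⟩
  · exact Or.inr <| Or.inr <| Or.inl ⟨P.symm.not_lt_of_lt_of_ne_bot' Q hJ₂ h,
      P.symm.not_lt_of_lt Q h, h, Q.not_lt_of_lt_of_ne_bot hJ₁ h⟩
  · exact Or.inr <| Or.inr <| Or.inr ⟨P.symm.not_lt_of_lt Q.symm h,
      P.symm.not_lt_of_lt_of_ne_bot' Q.symm hI₂ h, Q.symm.not_lt_of_lt_of_ne_bot hJ₁ h, h⟩
end

section
/- Define the value of a finite vertex-weighted rooted tree (weights in ℕ) recursively: the value of the empty tree is 1; the value of a single vertex of weight 0 is 1 and of positive weight is 0; otherwise pick a leaf l with parent l₁: if w(l) > w(l₁) the value is 0, else the value is C(w(l₁), w(l)) times the value of the tree obtained by deleting l and replacing w(l₁) by w(l₁) − w(l). Then this value is well defined, i.e., independent of the choice of leaf at each step. -/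
/-- The recursive leaf-elimination evaluation of a vertex-weighted forest: `RVal G s w z`
means that the value of the weighted forest induced on `s` (with weights `w`) can be
computed to be `z` by some sequence of leaf eliminations. The empty forest has value 1;
removing an isolated vertex `v` multiplies by 1 if `w v = 0` and by 0 otherwise;
removing a leaf `v` with unique neighbor `p` in `s` multiplies by `C(w p, w v)`
(which is 0 when `w v > w p`) and replaces `w p` by `w p − w v`. -/
inductive RVal {V : Type*} [DecidableEq V] (G : SimpleGraph V) :
    Finset V → (V → ℕ) → ℕ → Prop
  | empty (w : V → ℕ) : RVal G ∅ w 1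
  | isolated {s : Finset V} {w : V → ℕ} {z : ℕ} (v : V)
      (hv : v ∈ s) (hiso : ∀ u ∈ s, ¬G.Adj v u)
      (h : RVal G (s.erase v) w z) :
      RVal G s w ((if w v = 0 then 1 else 0) * z)
  | leaf {s : Finset V} {w : V → ℕ} {z : ℕ} (v p : V)
      (hv : v ∈ s) (hp : p ∈ s) (hadj : G.Adj v p)
      (huniq : ∀ u ∈ s, G.Adj v u → u = p)
      (h : RVal G (s.erase v) (Function.update w p (w p - w v)) z) :
      RVal G s w (Nat.choose (w p) (w v) * z)

/-!
Each elimination step removes a vertex `v` that is isolated or a leaf and multiplies by a factor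
depending only on the weights of `v` and of its parent. Two different removable vertices `u ≠ v`
stay removable after the other is removed, and the two orders give the same product of factors
and the same weights on what is left: for a common parent this is
`C(c, a) C(c - a, b) = C(c, b) C(c - b, a)`, and for an isolated edge `uv` both orders give
`[w u = w v]`. By induction on an evaluation, any evaluation can therefore be rearranged to start
by removing any prescribed removable vertex, and two evaluations agree.
-/

open Finset Function

theorem Nat.choose_mul_choose_sub_comm (c a b : ℕ) :
    c.choose a * (c - a).choose b = c.choose b * (c - b).choose a := by
  rcases le_or_gt (a + b) c with h | h
  · have ha := Nat.choose_mul (n := c) (k := a + b) (s := a) (Nat.le_add_right a b)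
    have hb := Nat.choose_mul (n := c) (k := a + b) (s := b) (Nat.le_add_left b a)
    simp only [Nat.add_sub_cancel_left, Nat.add_sub_cancel] at ha hb
    rw [← ha, ← hb, Nat.choose_symm_add]
  · have hzero : ∀ x y, x + y > c → c.choose x * (c - x).choose y = 0 := fun x y hxy => by
      rcases le_or_gt x c with hx | hx
      · rw [Nat.choose_eq_zero_of_lt (show c - x < y by omega), mul_zero]
      · rw [Nat.choose_eq_zero_of_lt hx, zero_mul]
    rw [hzero a b h, hzero b a (by omega)]

theorem Nat.choose_mul_ite_sub_eq_zero (a b : ℕ) :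
    a.choose b * (if a - b = 0 then 1 else 0) = if a = b then 1 else 0 := by
  rcases lt_trichotomy a b with h | rfl | h
  · simp [Nat.choose_eq_zero_of_lt h, h.ne]
  · simp
  · simp [show a - b ≠ 0 by omega, h.ne']

section

variable {V : Type*} [DecidableEq V] {G : SimpleGraph V}

/-- `LeafElim G s w v c w'`: one step of `RVal` removes `v` from `s`, multiplying by `c` and
leaving the weights `w'`. -/
inductive LeafElim (G : SimpleGraph V) (s : Finset V) (w : V → ℕ) : V → ℕ → (V → ℕ) → Prop
  | isolated (v : V) (hv : v ∈ s) (hiso : ∀ u ∈ s, ¬G.Adj v u) :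
      LeafElim G s w v (if w v = 0 then 1 else 0) w
  | leaf (v p : V) (hv : v ∈ s) (hp : p ∈ s) (hadj : G.Adj v p)
      (huniq : ∀ u ∈ s, G.Adj v u → u = p) :
      LeafElim G s w v ((w p).choose (w v)) (update w p (w p - w v))

namespace LeafElim

variable {s : Finset V} {w w₁ w₂ : V → ℕ} {u v : V} {a b : ℕ}

theorem mem (h : LeafElim G s w v a w₁) : v ∈ s := by
  cases h <;> assumption

theorem unique (h₁ : LeafElim G s w v a w₁) (h₂ : LeafElim G s w v b w₂) :
    a = b ∧ w₁ = w₂ := by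
  cases h₁ with
  | isolated _ hiso =>
    cases h₂ with
    | isolated => exact ⟨rfl, rfl⟩
    | leaf p _ hp hadj => exact absurd hadj (hiso p hp)
  | leaf p _ hp hadj huniq =>
    cases h₂ with
    | isolated _ hiso => exact absurd hadj (hiso p hp)
    | leaf q _ hq hadj' => obtain rfl := huniq q hq hadj'; exact ⟨rfl, rfl⟩

theorem diamond (h₁ : LeafElim G s w u a w₁) (h₂ : LeafElim G s w v b w₂) (huv : u ≠ v) :
    ∃ a' b' w₁₂ w₂₁, LeafElim G (s.erase u) w₁ v b' w₁₂ ∧ LeafElim G (s.erase v) w₂ u a' w₂₁ ∧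
      a * b' = b * a' ∧ ∀ x ∈ (s.erase u).erase v, w₁₂ x = w₂₁ x := by
  have hu' : u ∈ s.erase v := mem_erase.2 ⟨huv, h₁.mem⟩
  have hv' : v ∈ s.erase u := mem_erase.2 ⟨huv.symm, h₂.mem⟩
  have of_erase {x y : V} : x ∈ s.erase y → x ∈ s := mem_of_mem_erase
  cases h₁ with
  | isolated hu hisou =>
    cases h₂ with
    | isolated hv hisov =>
      exact ⟨_, _, _, _, .isolated v hv' fun x hx => hisov x (of_erase hx),
        .isolated u hu' fun x hx => hisou x (of_erase hx), mul_comm _ _, fun _ _ => rfl⟩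
    | leaf p hv hp hadj huniq =>
      have hpu : p ≠ u := fun h => hisou v hv (h ▸ hadj).symm
      refine ⟨_, _, _, _, .leaf v p hv' (mem_erase.2 ⟨hpu, hp⟩) hadj fun x hx => huniq x (of_erase hx),
        .isolated u hu' fun x hx => hisou x (of_erase hx), ?_, fun _ _ => rfl⟩
      rw [update_of_ne hpu.symm, mul_comm]
  | leaf q hu hq hadjq huniqu =>
    cases h₂ with
    | isolated hv hisov =>
      have hqv : q ≠ v := fun h => hisov u hu (h ▸ hadjq).symm
      refine ⟨_, _, _, _, .isolated v hv' fun x hx => hisov x (of_erase hx),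
        .leaf u q hu' (mem_erase.2 ⟨hqv, hq⟩) hadjq fun x hx => huniqu x (of_erase hx), ?_,
        fun _ _ => rfl⟩
      rw [update_of_ne hqv.symm, mul_comm]
    | leaf p hv hp hadj huniq =>
      rcases eq_or_ne p u with rfl | hpu
      · obtain rfl : v = q := huniqu v hv hadj.symm
        refine ⟨_, _, _, _, .isolated v hv' fun x hx h => (mem_erase.1 hx).1 (huniq x (of_erase hx) h),
          .isolated p hu' fun x hx h => (mem_erase.1 hx).1 (huniqu x (of_erase hx) h), ?_, ?_⟩
        · simp only [update_self, Nat.choose_mul_ite_sub_eq_zero]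
          split_ifs <;> omega
        · intro x hx
          simp [update_of_ne (mem_erase.1 hx).1, update_of_ne (mem_erase.1 (mem_of_mem_erase hx)).1]
      have hqv : q ≠ v := fun h => hpu (huniq u hu (h ▸ hadjq).symm).symm
      refine ⟨_, _, _, _,
        .leaf v p hv' (mem_erase.2 ⟨hpu, hp⟩) hadj fun x hx => huniq x (of_erase hx),
        .leaf u q hu' (mem_erase.2 ⟨hqv, hq⟩) hadjq fun x hx => huniqu x (of_erase hx), ?_⟩
      rcases eq_or_ne p q with rfl | hpq
      · simp only [update_self, update_of_ne hpu.symm, update_of_ne hqv.symm]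
        exact ⟨Nat.choose_mul_choose_sub_comm _ _ _, fun x _ => by rw [update_idem, update_idem, Nat.sub_right_comm]⟩
      · simp only [update_of_ne hpq, update_of_ne hpq.symm, update_of_ne hpu.symm,
          update_of_ne hqv.symm]
        exact ⟨mul_comm _ _, fun x _ => by rw [update_comm hpq]⟩

end LeafElim

namespace RVal

variable {s : Finset V} {w w' : V → ℕ} {v : V} {c z : ℕ}

theorem congr (h : RVal G s w z) (hw : ∀ x ∈ s, w x = w' x) : RVal G s w' z := by
  induction h generalizing w' with
  | empty => exact .empty w'
  | isolated v hv hiso _ ih =>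
    rw [hw v hv]
    exact .isolated v hv hiso (ih fun x hx => hw x (mem_of_mem_erase hx))
  | leaf v p hv hp hadj huniq _ ih =>
    rw [hw p hp, hw v hv]
    refine .leaf v p hv hp hadj huniq (ih fun x hx => ?_)
    rcases eq_or_ne x p with rfl | hxp
    · simp [hw x hp, hw v hv]
    · simp [update_of_ne hxp, hw x (mem_of_mem_erase hx)]

theorem of_leafElim (h : LeafElim G s w v c w') (hz : RVal G (s.erase v) w' z) :
    RVal G s w (c * z) := by
  cases h with
  | isolated hv hiso => exact .isolated v hv hiso hz
  | leaf p hv hp hadj huniq => exact .leaf v p hv hp hadj huniq hz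

@[elab_as_elim]
theorem leafElim_induction {motive : ∀ s w z, RVal G s w z → Prop}
    (empty : ∀ w, motive ∅ w 1 (.empty w))
    (step : ∀ {s w w' v c z} (hv : LeafElim G s w v c w') (hz : RVal G (s.erase v) w' z),
      motive _ _ _ hz → motive s w (c * z) (of_leafElim hv hz))
    {s w z} (h : RVal G s w z) : motive s w z h := by
  induction h with
  | empty w => exact empty w
  | isolated v hv hiso hz ih => exact step (.isolated v hv hiso) hz ih
  | leaf v p hv hp hadj huniq hz ih => exact step (.leaf v p hv hp hadj huniq) hz ih

theorem eq_one_of_empty (h : RVal G ∅ w z) : z = 1 := by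
  cases h with
  | empty => rfl
  | isolated _ hv => simp at hv
  | leaf _ _ hv => simp at hv

theorem exists_of_leafElim (h : RVal G s w z) (hv : LeafElim G s w v c w') :
    ∃ z', RVal G (s.erase v) w' z' ∧ z = c * z' := by
  induction h using leafElim_induction generalizing v c w' with
  | empty => exact absurd hv.mem (notMem_empty v)
  | @step s w w₁ u a z₁ hu hz₁ ih =>
    by_cases huv : u = v
    · subst huv
      obtain ⟨rfl, rfl⟩ := hu.unique hv
      exact ⟨z₁, hz₁, rfl⟩
    obtain ⟨a', b', w₁₂, w₂₁, hv', hu', hab, hw⟩ := hu.diamond hv huv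
    obtain ⟨z₂, hz₂, rfl⟩ := ih hv'
    refine ⟨a' * z₂, of_leafElim hu' ?_, by rw [← mul_assoc, hab, mul_assoc]⟩
    rw [erase_right_comm]
    exact hz₂.congr hw

end RVal

end

theorem rval_well_defined_general {V : Type*} [DecidableEq V] (G : SimpleGraph V)
    (s : Finset V) (w : V → ℕ) (z₁ z₂ : ℕ)
    (h₁ : RVal G s w z₁) (h₂ : RVal G s w z₂) : z₁ = z₂ := by
  induction h₁ using RVal.leafElim_induction generalizing z₂ with
  | empty => exact h₂.eq_one_of_empty.symm
  | step hv _ ih =>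
    obtain ⟨z', hz', rfl⟩ := h₂.exists_of_leafElim hv
    rw [ih z' hz']

/-- The recursively defined value of a vertex-weighted forest is well defined:
it does not depend on the order in which leaves are eliminated. -/
theorem rval_well_defined {V : Type*} [DecidableEq V] (G : SimpleGraph V)
    (hG : G.IsAcyclic) (s : Finset V) (w : V → ℕ) (z₁ z₂ : ℕ)
    (h₁ : RVal G s w z₁) (h₂ : RVal G s w z₂) : z₁ = z₂ :=
  rval_well_defined_general G s w z₁ z₂ h₁ h₂
end
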